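/- Let d, N ∈ ℕ and let X = (X_n)_{n=1}^N be a Latin hypercube sample in [0,1)^d. Then each point X_n is uniformly distributed on [0,1)^d, i.e., the law of X_n is the d-dimensional Lebesgue measure restricted to [0,1)^d. -/

import Mathlib

open MeasureTheory ProbabilityTheory Filter
open scoped ENNReal Classical

namespace LHSPaper

/-- The anchored box `[0,a) = ∏_i [0, a_i)` in `[0,1)^d`. -/
def anchoredBox {d : ℕ} (a : Fin d → ℝ) : Set (Fin d → ℝ) := {x | ∀ i, x i ∈ Set.Ico 0 (a i)}

/-- `C^d_0`, the collection of anchored boxes `[0,a)` with `a ∈ [0,1]^d`. -/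
def anchoredBoxes (d : ℕ) : Set (Set (Fin d → ℝ)) :=
  {S | ∃ a : Fin d → ℝ, (∀ i, a i ∈ Set.Icc (0 : ℝ) 1) ∧ S = anchoredBox a}

/-- `D^d_0`, the collection of differences `B \ A` of anchored boxes. -/
def boxDiffs (d : ℕ) : Set (Set (Fin d → ℝ)) :=
  {S | ∃ A ∈ anchoredBoxes d, ∃ B ∈ anchoredBoxes d, S = B \ A}

/-- The half-open unit cube `[0,1)^d`. -/
def unitCube (d : ℕ) : Set (Fin d → ℝ) := {x | ∀ i, x i ∈ Set.Ico (0 : ℝ) 1}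

/-- `γ`-negative dependence of the indicators of the events `A 1, …, A N`. -/
def GammaNegDep {Ω : Type*} [MeasurableSpace Ω] (μ : Measure Ω) {N : ℕ}
    (γ : ℝ≥0∞) (A : Fin N → Set Ω) : Prop :=
  ∀ J : Finset (Fin N), J.Nonempty →
    μ (⋂ j ∈ J, A j) ≤ γ * ∏ j ∈ J, μ (A j) ∧
    μ (⋂ j ∈ J, (A j)ᶜ) ≤ γ * ∏ j ∈ J, μ (A j)ᶜ

/-- The `𝒮`-correlation number of a random point tuple `X`. -/
noncomputable def corrNum {Ω : Type*} [MeasurableSpace Ω] (μ : Measure Ω) {N d : ℕ}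
    (𝒮 : Set (Set (Fin d → ℝ))) (X : Fin N → Ω → Fin d → ℝ) : ℝ≥0∞ :=
  ⨆ (S : Set (Fin d → ℝ)) (_ : S ∈ 𝒮) (J : Finset (Fin N)) (_ : J.Nonempty),
    max (μ (⋂ j ∈ J, {ω | X j ω ∈ S}) / ∏ j ∈ J, μ {ω | X j ω ∈ S})
        (μ (⋂ j ∈ J, {ω | X j ω ∉ S}) / ∏ j ∈ J, μ {ω | X j ω ∉ S})

instance (N : ℕ) : MeasurableSpace (Equiv.Perm (Fin N)) := ⊤

instance (N : ℕ) : Nonempty (Equiv.Perm (Fin N)) := ⟨Equiv.refl _⟩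

/-- Value types of the sources of randomness of a Latin hypercube sample:
`d` random permutations and `N·d` random reals. -/
def lhsβ (d N : ℕ) : (Fin d ⊕ (Fin N × Fin d)) → Type :=
  fun i => Sum.elim (fun _ => Equiv.Perm (Fin N)) (fun _ => ℝ) i

noncomputable def lhsMS (d N : ℕ) : (i : Fin d ⊕ (Fin N × Fin d)) → MeasurableSpace (lhsβ d N i) :=
  fun i => match i with
  | .inl _ => ⊤
  | .inr _ => inferInstanceAs (MeasurableSpace ℝ)

def lhsFun {Ω : Type*} {d N : ℕ} (π : Fin d → Ω → Equiv.Perm (Fin N))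
    (U : Fin N → Ω → Fin d → ℝ) : (i : Fin d ⊕ (Fin N × Fin d)) → Ω → lhsβ d N i :=
  fun i => match i with
  | .inl j => π j
  | .inr p => fun ω => U p.1 ω p.2

/-- `X` is a Latin hypercube sample of `N` points in `[0,1)^d`, built from the
uniformly distributed random permutations `π_j` and the uniformly distributed
random variables `U_{n,j}`, all mutually independent. -/
def IsLHS {Ω : Type*} [MeasurableSpace Ω] (μ : Measure Ω) (d N : ℕ)
    (X : Fin N → Ω → Fin d → ℝ)
    (π : Fin d → Ω → Equiv.Perm (Fin N)) (U : Fin N → Ω → Fin d → ℝ) : Prop :=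
  (∀ j, Measure.map (π j) μ = (PMF.uniformOfFintype (Equiv.Perm (Fin N))).toMeasure) ∧
  (∀ n j, Measure.map (fun ω => U n ω j) μ = volume.restrict (Set.Ico (0 : ℝ) 1)) ∧
  @iIndepFun _ _ _ _ (lhsMS d N) (lhsFun π U) μ ∧
  (∀ n j ω, X n ω j = (((π j ω) n : ℕ) + U n ω j) / N)

/-- An elementary interval in base `b` of order `k` in `[0,1)^d`. -/
def IsElemInterval (b d k : ℕ) (E : Set (Fin d → ℝ)) : Prop :=
  ∃ ℓ : Fin d → ℕ, ∃ a : Fin d → ℕ, (∀ i, a i < b ^ ℓ i) ∧ (∑ i, ℓ i = k) ∧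
    E = {x | ∀ i, x i ∈ Set.Ico ((a i : ℝ) / b ^ ℓ i) (((a i : ℝ) + 1) / b ^ ℓ i)}

/-- A `(t,m,d)`-net in base `b`: `b^m` points in `[0,1)^d` such that every elementary
interval of order `m - t` contains exactly `b^t` points (with multiplicity). -/
def IsNet (b d m t : ℕ) (P : Fin (b ^ m) → Fin d → ℝ) : Prop :=
  (∀ n, P n ∈ unitCube d) ∧
  ∀ E : Set (Fin d → ℝ), IsElemInterval b d (m - t) E →
    (Finset.univ.filter fun n => P n ∈ E).card = b ^ t

/-- A `b`-ary scrambling of depth `ℓ`: a self-map of `[0,1)` mapping, for each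
`k ∈ {1,…,ℓ}`, elementary intervals of order `k` into elementary intervals of order `k`,
distinct ones into distinct ones. -/
def IsScrambling (b ℓ : ℕ) (σ : ℝ → ℝ) : Prop :=
  (∀ x ∈ Set.Ico (0 : ℝ) 1, σ x ∈ Set.Ico (0 : ℝ) 1) ∧
  ∀ k, 1 ≤ k → k ≤ ℓ → ∃ f : ℕ → ℕ,
    (∀ a < b ^ k, f a < b ^ k) ∧
    (∀ a < b ^ k, ∀ a' < b ^ k, a ≠ a' → f a ≠ f a') ∧
    (∀ a < b ^ k, ∀ x ∈ Set.Ico ((a : ℝ) / b ^ k) (((a : ℝ) + 1) / b ^ k),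
      σ x ∈ Set.Ico ((f a : ℝ) / b ^ k) (((f a : ℝ) + 1) / b ^ k))

/-- A basic cube of an abstract scrambled `(t,m,d)`-net in base `b`. -/
def IsBasicCube (b d m t : ℕ) (C : Set (Fin d → ℝ)) : Prop :=
  ∃ k : Fin d → ℕ, (∀ j, k j < b ^ (m - t)) ∧
    C = {x | ∀ j, x j ∈ Set.Ico ((k j : ℝ) / b ^ (m - t)) (((k j : ℝ) + 1) / b ^ (m - t))}

/-- An abstract scrambled `(t,m,d)`-net in base `b`. -/
def IsAbstractScrambledNet {Ω : Type*} [MeasurableSpace Ω] (μ : Measure Ω)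
    (b d m t : ℕ) (Y : Fin (b ^ m) → Ω → (Fin d → ℝ)) : Prop :=
  (∀ᵐ ω ∂μ, IsNet b d m t fun n => Y n ω) ∧
  (∀ i C, IsBasicCube b d m t C → μ {ω | Y i ω ∈ C} = ((b : ℝ≥0∞) ^ (d * (m - t)))⁻¹) ∧
  (∀ M : Set (Fin d → ℝ), MeasurableSet M →
    ∀ J : Finset (Fin (b ^ m)), J.Nonempty →
    ∀ C : Fin (b ^ m) → Set (Fin d → ℝ), (∀ j ∈ J, IsBasicCube b d m t (C j)) →
      μ (⋂ j ∈ J, {ω | Y j ω ∈ C j}) ≠ 0 →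
      (μ[|⋂ j ∈ J, {ω | Y j ω ∈ C j}]) (⋂ j ∈ J, {ω | Y j ω ∈ M}) =
        ∏ j ∈ J, volume (M ∩ C j) / volume (C j))

end LHSPaper

/-!
The `j`-th coordinate of `X n` is `(π_j(n) + U_{n,j}) / N`, a function of the pair
`(π_j(n), U_{n,j})`, and the `2d` variables `π_1(n), …, π_d(n), U_{n,1}, …, U_{n,d}` are
independent. Hence the law of `X n` is the `d`-fold product of the law of `(K + V) / N`, where
`K` is uniform on `{0, …, N-1}` (all fibres of `σ ↦ σ n` on permutations have the same size) and
`V` is independent of `K` and uniform on `[0,1)`. Given `K = k`, the variable `(k + V) / N` is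
uniform on `[k/N, (k+1)/N)`, so averaging over `k` gives Lebesgue measure on `[0,1)`.
-/

open Finset

theorem Equiv.Perm.card_filter_apply_eq_mul_card {α : Type*} [Fintype α] [DecidableEq α] (a k : α) :
    #{σ : Equiv.Perm α | σ a = k} * Fintype.card α = Fintype.card (Equiv.Perm α) := by
  have hfiber (k' : α) : #{σ : Equiv.Perm α | σ a = k'} = #{σ : Equiv.Perm α | σ a = k} :=
    card_bij' (fun σ _ => Equiv.swap k' k * σ) (fun σ _ => Equiv.swap k' k * σ)
      (by simp +contextual) (by simp +contextual) (by simp) (by simp)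
  calc #{σ : Equiv.Perm α | σ a = k} * Fintype.card α
      = ∑ k' : α, #{σ : Equiv.Perm α | σ a = k'} := by simp [hfiber, mul_comm]
    _ = Fintype.card (Equiv.Perm α) :=
      (card_eq_sum_card_fiberwise (f := fun σ : Equiv.Perm α => σ a) (by simp)).symm

theorem PMF.map_uniformOfFintype_perm_apply {α : Type*} [Fintype α] [DecidableEq α]
    [Nonempty α] (a : α) :
    (PMF.uniformOfFintype (Equiv.Perm α)).map (fun σ => σ a) = PMF.uniformOfFintype α := by
  ext k
  simp only [PMF.map_apply, tsum_fintype, PMF.uniformOfFintype_apply, Finset.sum_ite,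
    Finset.sum_const, nsmul_eq_mul, mul_zero, add_zero, eq_comm (a := k)]
  have hc : (#{σ : Equiv.Perm α | σ a = k} : ℝ≥0∞) ≠ 0 := by
    simpa using ⟨Equiv.swap a k, by simp⟩
  rw [← Equiv.Perm.card_filter_apply_eq_mul_card a k, Nat.cast_mul,
    ENNReal.mul_inv (.inl hc) (.inl (ENNReal.natCast_ne_top _)), ← mul_assoc,
    ENNReal.mul_inv_cancel hc (ENNReal.natCast_ne_top _), one_mul]

theorem Real.volume_preimage_add_div (a : ℝ) {c : ℝ} (hc : 0 < c) (s : Set ℝ) :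
    volume ((fun u => (a + u) / c) ⁻¹' s) = ENNReal.ofReal c * volume s := by
  change volume ((a + ·) ⁻¹' ((· * c⁻¹) ⁻¹' s)) = _
  rw [measure_preimage_add, Real.volume_preimage_mul_right (inv_ne_zero hc.ne'), inv_inv,
    abs_of_pos hc]

theorem Real.preimage_add_div_Ico (a : ℝ) {c : ℝ} (hc : 0 < c) :
    (fun u => (a + u) / c) ⁻¹' Set.Ico (a / c) ((a + 1) / c) = Set.Ico 0 1 := by
  ext u
  simp only [Set.mem_preimage, Set.mem_Ico, div_le_div_iff_of_pos_right hc,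
    div_lt_div_iff_of_pos_right hc]
  constructor <;> rintro ⟨h₁, h₂⟩ <;> constructor <;> linarith

theorem Real.mem_Ico_div_iff_floor_eq {N : ℕ} (hN : 0 < N) (k : Fin N) (x : ℝ) :
    x ∈ Set.Ico ((k : ℝ) / N) (((k : ℝ) + 1) / N) ↔ x ∈ Set.Ico 0 1 ∧ ⌊x * N⌋₊ = k := by
  have hNR : (0 : ℝ) < N := by exact_mod_cast hN
  have hk : (k : ℝ) + 1 ≤ N := by exact_mod_cast k.isLt
  simp only [Set.mem_Ico, div_le_iff₀ hNR, lt_div_iff₀ hNR]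
  constructor
  · rintro ⟨h₁, h₂⟩
    have h₀ : 0 ≤ x := nonneg_of_mul_nonneg_left (k.val.cast_nonneg.trans h₁) hNR
    exact ⟨⟨h₀, by nlinarith⟩, (Nat.floor_eq_iff (by positivity)).mpr ⟨h₁, h₂⟩⟩
  · rintro ⟨⟨h₀, -⟩, hfloor⟩
    exact (Nat.floor_eq_iff (by positivity)).mp hfloor

theorem Real.sum_volume_inter_Ico_div {N : ℕ} (hN : 0 < N) {s : Set ℝ} (hs : MeasurableSet s) :
    ∑ k : Fin N, volume (s ∩ Set.Ico ((k : ℝ) / N) (((k : ℝ) + 1) / N))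
      = volume (s ∩ Set.Ico 0 1) := by
  have hunion : ⋃ k : Fin N, s ∩ Set.Ico ((k : ℝ) / N) (((k : ℝ) + 1) / N) = s ∩ Set.Ico 0 1 := by
    ext x
    simp only [Set.mem_iUnion, Set.mem_inter_iff, Real.mem_Ico_div_iff_floor_eq hN]
    constructor
    · rintro ⟨k, hx, hx01, -⟩
      exact ⟨hx, hx01⟩
    · rintro ⟨hx, hx01⟩
      have hlt : ⌊x * N⌋₊ < N := by
        rw [Nat.floor_lt (mul_nonneg hx01.1 N.cast_nonneg)]
        exact mul_lt_of_lt_one_left (by exact_mod_cast hN) hx01.2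
      exact ⟨⟨_, hlt⟩, hx, hx01, rfl⟩
  rw [← hunion, measure_iUnion _ fun k => hs.inter measurableSet_Ico, tsum_fintype]
  intro k k' hkk'
  refine Set.disjoint_left.mpr fun x hx hx' => hkk' (Fin.ext ?_)
  rw [Set.mem_inter_iff, Real.mem_Ico_div_iff_floor_eq hN] at hx hx'
  exact hx.2.2.symm.trans hx'.2.2

theorem ProbabilityTheory.map_add_div_prod_uniform {N : ℕ} [NeZero N] :
    (((PMF.uniformOfFintype (Fin N)).toMeasure.map fun k : Fin N => (k : ℝ)).prod
        (volume.restrict (Set.Ico (0 : ℝ) 1))).map (fun p : ℝ × ℝ => (p.1 + p.2) / N)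
      = volume.restrict (Set.Ico (0 : ℝ) 1) := by
  have hN : 0 < N := Nat.pos_of_neZero N
  have hNR : (0 : ℝ) < N := by exact_mod_cast hN
  ext s hs
  have hpre : MeasurableSet ((fun p : ℝ × ℝ => (p.1 + p.2) / N) ⁻¹' s) :=
    (by fun_prop : Measurable fun p : ℝ × ℝ => (p.1 + p.2) / N) hs
  rw [Measure.map_apply (by fun_prop) hs, Measure.prod_apply hpre,
    lintegral_map (measurable_measure_prodMk_left hpre) (by fun_prop), lintegral_fintype,
    Measure.restrict_apply hs, ← Real.sum_volume_inter_Ico_div hN hs]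
  refine Finset.sum_congr rfl fun k _ => ?_
  have hslice : Prod.mk (k : ℝ) ⁻¹' ((fun p : ℝ × ℝ => (p.1 + p.2) / N) ⁻¹' s) =
      (fun u => ((k : ℝ) + u) / N) ⁻¹' s := rfl
  rw [PMF.toMeasure_apply_singleton _ _ (measurableSet_singleton k), PMF.uniformOfFintype_apply,
    Fintype.card_fin, Measure.restrict_apply (measurable_prodMk_left hpre), hslice,
    ← Real.preimage_add_div_Ico (k : ℝ) hNR, ← Set.preimage_inter,
    Real.volume_preimage_add_div _ hNR, ENNReal.ofReal_natCast, mul_comm, ← mul_assoc,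
    ENNReal.inv_mul_cancel (by exact_mod_cast hN.ne') (ENNReal.natCast_ne_top _), one_mul]

theorem MeasureTheory.Measure.pi_sumElim_map_pair {ι α : Type*} [Fintype ι] [MeasurableSpace α]
    (μ ν : ι → Measure α) [∀ i, SigmaFinite (μ i)] [∀ i, SigmaFinite (ν i)] :
    (Measure.pi (Sum.elim μ ν)).map (fun w i => (w (.inl i), w (.inr i)))
      = Measure.pi fun i => (μ i).prod (ν i) := by
  have hpair : (fun (w : ι ⊕ ι → α) i => (w (.inl i), w (.inr i))) =
      (MeasurableEquiv.arrowProdEquivProdArrow α α ι).symm ∘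
        MeasurableEquiv.sumPiEquivProdPi (fun _ => α) := rfl
  have : ∀ i, SigmaFinite (Sum.elim μ ν i) := by
    rintro (i | i)
    exacts [inferInstanceAs (SigmaFinite (μ i)), inferInstanceAs (SigmaFinite (ν i))]
  rw [hpair, ← Measure.map_map (MeasurableEquiv.measurable _) (MeasurableEquiv.measurable _),
    (measurePreserving_sumPiEquivProdPi (Sum.elim μ ν)).map_eq]
  exact (measurePreserving_arrowProdEquivProdArrow α α ι μ ν).symm.map_eq

namespace LHSPaper

theorem pi_restrict_Ico_eq_restrict_unitCube (d : ℕ) :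
    Measure.pi (fun _ : Fin d => volume.restrict (Set.Ico (0 : ℝ) 1))
      = volume.restrict (unitCube d) := by
  have hcube : unitCube d = Set.univ.pi fun _ => Set.Ico (0 : ℝ) 1 := by
    ext x
    simp [unitCube]
  rw [hcube, volume_pi, Measure.restrict_pi_pi]

def lhsPointSources {Ω : Type*} {d N : ℕ} (π : Fin d → Ω → Equiv.Perm (Fin N))
    (U : Fin N → Ω → Fin d → ℝ) (n : Fin N) : Fin d ⊕ Fin d → Ω → ℝ
  | .inl j => fun ω => (π j ω n : ℝ)
  | .inr j => fun ω => U n ω j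

namespace IsLHS

variable {Ω : Type*} [MeasurableSpace Ω] {μ : Measure Ω} {d N : ℕ} {X : Fin N → Ω → Fin d → ℝ}
  {π : Fin d → Ω → Equiv.Perm (Fin N)} {U : Fin N → Ω → Fin d → ℝ}

theorem aemeasurable_perm (h : IsLHS μ d N X π U) (j : Fin d) : AEMeasurable (π j) μ :=
  .of_map_ne_zero (h.1 j ▸ IsProbabilityMeasure.ne_zero _)

theorem aemeasurable_lhsPointSources (h : IsLHS μ d N X π U) (n : Fin N) (i : Fin d ⊕ Fin d) :
    AEMeasurable (lhsPointSources π U n i) μ := by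
  rcases i with j | j
  · exact (measurable_from_top (f := fun σ : Equiv.Perm (Fin N) => (σ n : ℝ))).comp_aemeasurable
      (h.aemeasurable_perm j)
  · exact .of_map_ne_zero (by simp [lhsPointSources, h.2.1 n j, Measure.restrict_eq_zero])

theorem iIndepFun_lhsPointSources (h : IsLHS μ d N X π U) (n : Fin N) :
    iIndepFun (lhsPointSources π U n) μ := by
  have he : Function.Injective (Sum.map id (Prod.mk n) : Fin d ⊕ Fin d → _) :=
    Sum.map_injective.mpr ⟨Function.injective_id, Prod.mk_right_injective n⟩
  have := (h.2.2.1.precomp he).comp₀ (γ := fun _ => ℝ) (mγ := fun _ => inferInstance)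
    (fun i => match i with
      | .inl _ => fun σ : Equiv.Perm (Fin N) => (σ n : ℝ)
      | .inr _ => fun u : ℝ => u)
    (by rintro (j | j); exacts [h.aemeasurable_perm j, h.aemeasurable_lhsPointSources n (.inr j)])
    (by rintro (j | j); exacts [measurable_from_top.aemeasurable, aemeasurable_id])
  convert this using 1
  ext (j | j) <;> rfl

theorem map_lhsPointSources [NeZero N] (h : IsLHS μ d N X π U) (n : Fin N) :
    (fun i => μ.map (lhsPointSources π U n i)) =
      Sum.elim (fun _ => (PMF.uniformOfFintype (Fin N)).toMeasure.map fun k : Fin N => (k : ℝ))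
        (fun _ => volume.restrict (Set.Ico 0 1)) := by
  ext1 (j | j)
  · change μ.map (((fun k : Fin N => (k : ℝ)) ∘ fun σ => σ n) ∘ π j) =
      (PMF.uniformOfFintype (Fin N)).toMeasure.map fun k : Fin N => (k : ℝ)
    rw [← AEMeasurable.map_map_of_aemeasurable measurable_from_top.aemeasurable
        (h.aemeasurable_perm j), h.1 j, ← Measure.map_map (by fun_prop) measurable_from_top,
      PMF.toMeasure_map _ _ measurable_from_top, PMF.map_uniformOfFintype_perm_apply]
  · exact h.2.1 n j

theorem eq_comp_lhsPointSources (h : IsLHS μ d N X π U) (n : Fin N) :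
    X n = ((fun (z : Fin d → ℝ × ℝ) j => ((z j).1 + (z j).2) / N) ∘
      (fun w j => (w (.inl j), w (.inr j)))) ∘ (fun ω i => lhsPointSources π U n i ω) := by
  funext ω j
  exact h.2.2.2 n j ω

end IsLHS

theorem stmt13_general {Ω : Type*} [MeasurableSpace Ω] (μ : Measure Ω)
    (d N : ℕ)
    (X : Fin N → Ω → Fin d → ℝ) (π : Fin d → Ω → Equiv.Perm (Fin N))
    (U : Fin N → Ω → Fin d → ℝ) (h : IsLHS μ d N X π U) (n : Fin N) :
    Measure.map (X n) μ = volume.restrict (unitCube d) := by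
  have : NeZero N := ⟨n.pos.ne'⟩
  have hW := h.aemeasurable_lhsPointSources n
  rw [h.eq_comp_lhsPointSources n,
    ← AEMeasurable.map_map_of_aemeasurable (by fun_prop) (aemeasurable_pi_lambda _ hW),
    ← Measure.map_map (by fun_prop) (by fun_prop),
    (h.iIndepFun_lhsPointSources n).map_fun_eq_pi_map hW, h.map_lhsPointSources n,
    Measure.pi_sumElim_map_pair,
    Measure.pi_map_pi (f := fun _ (p : ℝ × ℝ) => (p.1 + p.2) / N) (fun _ => by fun_prop),
    map_add_div_prod_uniform, pi_restrict_Ico_eq_restrict_unitCube]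

/-- Each point of a LHS is uniformly distributed on `[0,1)^d`. -/
theorem stmt13 {Ω : Type*} [MeasurableSpace Ω] (μ : Measure Ω) [IsProbabilityMeasure μ]
    (d N : ℕ)
    (X : Fin N → Ω → Fin d → ℝ) (π : Fin d → Ω → Equiv.Perm (Fin N))
    (U : Fin N → Ω → Fin d → ℝ) (h : IsLHS μ d N X π U) (n : Fin N) :
    Measure.map (X n) μ = volume.restrict (unitCube d) :=
  stmt13_general μ d N X π U h n

end LHSPaper
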